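/- arXiv:2603.14194 — 6 statements merged into one kernel-verified Lean document; each statement's English description precedes it below -/
import Mathlib

section
/- Let n ≥ 1, let α, c ∈ ℝ, b > 0 and λ ∈ ℝ, let ψ : ℝⁿ → ℝ be smooth and a : ℝ × ℝⁿ → ℂ be smooth. Define the operators (acting in (t,x), with ∇ and Δ in x only): T₃a = (b|∇ψ|² − 1)a; T₂a = (b|∇ψ|² − 3)∂_t a + 2b ∇ψ·∇a + (bΔψ + c²|∇ψ|² − α)a; T₁a = 3∂_t²a + (2α − bΔψ)∂_t a − 2∇ψ·(b∇∂_t a + c²∇a) − bΔa − c²(Δψ)a. Then for every (t,x) ∈ ℝ × ℝⁿ, P(e^{iλ(ψ(x)+t)} a)(t,x) = e^{iλ(ψ(x)+t)}( iλ³ (T₃a)(t,x) + λ² (T₂a)(t,x) + iλ (T₁a)(t,x) + (Pa)(t,x) ). -/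
open scoped BigOperators ContDiff

noncomputable section

/-- Time derivative `∂_t u`. -/
def dt {n : ℕ} (u : ℝ → (Fin n → ℝ) → ℂ) : ℝ → (Fin n → ℝ) → ℂ :=
  fun t x => deriv (fun s => u s x) t

/-- Spatial partial derivative `∂_{x_j} u` (in `x` only). -/
def pd {n : ℕ} (j : Fin n) (u : ℝ → (Fin n → ℝ) → ℂ) : ℝ → (Fin n → ℝ) → ℂ :=
  fun t x => fderiv ℝ (fun y => u t y) x (Pi.single j 1)

/-- Spatial Laplacian `Δu` (in `x` only). -/
def lap {n : ℕ} (u : ℝ → (Fin n → ℝ) → ℂ) : ℝ → (Fin n → ℝ) → ℂ :=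
  fun t x => ∑ j, pd j (pd j u) t x

/-- Spatial partial derivative of a real-valued function of `x`. -/
def pdR {n : ℕ} (j : Fin n) (ψ : (Fin n → ℝ) → ℝ) : (Fin n → ℝ) → ℝ :=
  fun x => fderiv ℝ ψ x (Pi.single j 1)

/-- Spatial Laplacian of a real-valued function of `x`. -/
def lapR {n : ℕ} (ψ : (Fin n → ℝ) → ℝ) : (Fin n → ℝ) → ℝ :=
  fun x => ∑ j, pdR j (pdR j ψ) x

/-- `|∇ψ|²`. -/
def gradNormSq {n : ℕ} (ψ : (Fin n → ℝ) → ℝ) : (Fin n → ℝ) → ℝ :=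
  fun x => ∑ j, (pdR j ψ x) ^ 2

/-- The linear MGT operator `Pu = ∂_t³u + α ∂_t²u − b Δ ∂_t u − c² Δ u`. -/
def MGT {n : ℕ} (α c b : ℝ) (u : ℝ → (Fin n → ℝ) → ℂ) : ℝ → (Fin n → ℝ) → ℂ :=
  fun t x => dt (dt (dt u)) t x + (α : ℂ) * dt (dt u) t x
    - (b : ℂ) * lap (dt u) t x - (c : ℂ) ^ 2 * lap u t x

/-- `T₃a = (b|∇ψ|² − 1)a`. -/
def T3 {n : ℕ} (b : ℝ) (ψ : (Fin n → ℝ) → ℝ) (a : ℝ → (Fin n → ℝ) → ℂ) :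
    ℝ → (Fin n → ℝ) → ℂ :=
  fun t x => ((b * gradNormSq ψ x - 1 : ℝ) : ℂ) * a t x

/-- `T₂a = (b|∇ψ|² − 3)∂_t a + 2b ∇ψ·∇a + (bΔψ + c²|∇ψ|² − α)a`. -/
def T2 {n : ℕ} (α c b : ℝ) (ψ : (Fin n → ℝ) → ℝ) (a : ℝ → (Fin n → ℝ) → ℂ) :
    ℝ → (Fin n → ℝ) → ℂ :=
  fun t x => ((b * gradNormSq ψ x - 3 : ℝ) : ℂ) * dt a t x
    + 2 * (b : ℂ) * ∑ j, ((pdR j ψ x : ℝ) : ℂ) * pd j a t x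
    + ((b * lapR ψ x + c ^ 2 * gradNormSq ψ x - α : ℝ) : ℂ) * a t x

/-- `T₁a = 3∂_t²a + (2α − bΔψ)∂_t a − 2∇ψ·(b∇∂_t a + c²∇a) − bΔa − c²(Δψ)a`. -/
def T1 {n : ℕ} (α c b : ℝ) (ψ : (Fin n → ℝ) → ℝ) (a : ℝ → (Fin n → ℝ) → ℂ) :
    ℝ → (Fin n → ℝ) → ℂ :=
  fun t x => 3 * dt (dt a) t x + ((2 * α - b * lapR ψ x : ℝ) : ℂ) * dt a t x
    - 2 * ∑ j, ((pdR j ψ x : ℝ) : ℂ) *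
        ((b : ℂ) * pd j (dt a) t x + (c : ℂ) ^ 2 * pd j a t x)
    - (b : ℂ) * lap a t x - (c : ℂ) ^ 2 * ((lapR ψ x : ℝ) : ℂ) * a t x

def Sm {n : ℕ} (u : ℝ → (Fin n → ℝ) → ℂ) : Prop :=
  ContDiff ℝ ∞ (fun p : ℝ × (Fin n → ℝ) => u p.1 p.2)

variable {n : ℕ}

theorem hasDerivAt_sliceT {u : ℝ → (Fin n → ℝ) → ℂ} (hu : Sm u) (t : ℝ) (x : Fin n → ℝ) :
    HasDerivAt (fun s => u s x)
      (fderiv ℝ (fun p : ℝ × (Fin n → ℝ) => u p.1 p.2) (t, x) (1, 0)) t := by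
  have h1 := ((hu.differentiable (by norm_num)) (t, x)).hasFDerivAt
  have h2 : HasDerivAt (fun s : ℝ => ((s, x) : ℝ × (Fin n → ℝ))) (1, 0) t :=
    (hasDerivAt_id t).prodMk (hasDerivAt_const t x)
  exact h1.comp_hasDerivAt t h2

theorem diffT {u : ℝ → (Fin n → ℝ) → ℂ} (hu : Sm u) (t : ℝ) (x : Fin n → ℝ) :
    DifferentiableAt ℝ (fun s => u s x) t := (hasDerivAt_sliceT hu t x).differentiableAt

theorem sm_dt {u : ℝ → (Fin n → ℝ) → ℂ} (hu : Sm u) : Sm (dt u) := by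
  have h : (fun p : ℝ × (Fin n → ℝ) => dt u p.1 p.2)
      = fun p => fderiv ℝ (fun q : ℝ × (Fin n → ℝ) => u q.1 q.2) p ((1:ℝ), (0 : Fin n → ℝ)) := by
    funext p
    exact (hasDerivAt_sliceT hu p.1 p.2).deriv
  rw [Sm, h]
  exact (hu.fderiv_right (by simp)).clm_apply contDiff_const

theorem hasFDerivAt_sliceX {u : ℝ → (Fin n → ℝ) → ℂ} (hu : Sm u) (t : ℝ) (x : Fin n → ℝ) :
    HasFDerivAt (fun y => u t y)
      ((fderiv ℝ (fun p : ℝ × (Fin n → ℝ) => u p.1 p.2) (t, x)).comp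
        (ContinuousLinearMap.inr ℝ ℝ (Fin n → ℝ))) x := by
  have h1 := ((hu.differentiable (by norm_num)) (t, x)).hasFDerivAt
  have h2 : HasFDerivAt (fun y : Fin n → ℝ => ((t, y) : ℝ × (Fin n → ℝ)))
      (ContinuousLinearMap.inr ℝ ℝ (Fin n → ℝ)) x :=
    (hasFDerivAt_const t x).prodMk (hasFDerivAt_id x)
  exact h1.comp x h2

theorem diffX {u : ℝ → (Fin n → ℝ) → ℂ} (hu : Sm u) (t : ℝ) (x : Fin n → ℝ) :
    DifferentiableAt ℝ (fun y => u t y) x := (hasFDerivAt_sliceX hu t x).differentiableAt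

theorem sm_pd {u : ℝ → (Fin n → ℝ) → ℂ} (hu : Sm u) (j : Fin n) : Sm (pd j u) := by
  have h : (fun p : ℝ × (Fin n → ℝ) => pd j u p.1 p.2)
      = fun p => fderiv ℝ (fun q : ℝ × (Fin n → ℝ) => u q.1 q.2) p ((0:ℝ), Pi.single j 1) := by
    funext p
    have := (hasFDerivAt_sliceX hu p.1 p.2).fderiv
    show fderiv ℝ (fun y => u p.1 y) p.2 (Pi.single j 1) = _
    rw [this]
    simp
  rw [Sm, h]
  exact (hu.fderiv_right (by simp)).clm_apply contDiff_const

-- linearity of dt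
theorem dt_addF {u v : ℝ → (Fin n → ℝ) → ℂ} (hu : Sm u) (hv : Sm v) :
    dt (fun t x => u t x + v t x) = fun t x => dt u t x + dt v t x := by
  funext t x
  exact deriv_add (diffT hu t x) (diffT hv t x)

theorem dt_cmulF (k : ℂ) {u : ℝ → (Fin n → ℝ) → ℂ} (hu : Sm u) :
    dt (fun t x => k * u t x) = fun t x => k * dt u t x := by
  funext t x
  exact deriv_const_mul k (diffT hu t x)

-- linearity of pd
theorem pd_addF (j : Fin n) {u v : ℝ → (Fin n → ℝ) → ℂ} (hu : Sm u) (hv : Sm v) :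
    pd j (fun t x => u t x + v t x) = fun t x => pd j u t x + pd j v t x := by
  funext t x
  show fderiv ℝ (fun y => u t y + v t y) x (Pi.single j 1) = _
  rw [fderiv_fun_add (diffX hu t x) (diffX hv t x)]
  simp [pd]

theorem pd_cmulF (j : Fin n) (k : ℂ) {u : ℝ → (Fin n → ℝ) → ℂ} (hu : Sm u) :
    pd j (fun t x => k * u t x) = fun t x => k * pd j u t x := by
  funext t x
  show fderiv ℝ (fun y => k * u t y) x (Pi.single j 1) = _
  rw [fderiv_const_mul (diffX hu t x)]
  simp [pd]

-- smoothness closure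
theorem sm_add {u v : ℝ → (Fin n → ℝ) → ℂ} (hu : Sm u) (hv : Sm v) :
    Sm (fun t x => u t x + v t x) := hu.add hv

theorem sm_cmul (k : ℂ) {u : ℝ → (Fin n → ℝ) → ℂ} (hu : Sm u) :
    Sm (fun t x => k * u t x) := contDiff_const.mul hu

theorem sm_coeff {g : (Fin n → ℝ) → ℝ} (hg : ContDiff ℝ ∞ g) {u : ℝ → (Fin n → ℝ) → ℂ}
    (hu : Sm u) : Sm (fun t x => ((g x : ℝ) : ℂ) * u t x) :=
  (Complex.ofRealCLM.contDiff.comp (hg.comp contDiff_snd)).mul hu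

-- coefficient product rule
theorem pd_coeffF (j : Fin n) {g : (Fin n → ℝ) → ℝ} (hg : ContDiff ℝ ∞ g)
    {u : ℝ → (Fin n → ℝ) → ℂ} (hu : Sm u) :
    pd j (fun t x => ((g x : ℝ) : ℂ) * u t x)
      = fun t x => ((pdR j g x : ℝ) : ℂ) * u t x
          + ((g x : ℝ) : ℂ) * pd j u t x := by
  funext t x
  have hgC : HasFDerivAt (fun y => ((g y : ℝ) : ℂ)) (Complex.ofRealCLM.comp (fderiv ℝ g x)) x :=
    Complex.ofRealCLM.hasFDerivAt.comp x ((hg.differentiable (by norm_num)) x).hasFDerivAt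
  have hu' := (diffX hu t x).hasFDerivAt
  have h := (hgC.fun_mul hu').fderiv
  show fderiv ℝ (fun y => ((g y : ℝ) : ℂ) * u t y) x (Pi.single j 1) = _
  rw [h]
  simp [pd, pdR, smul_eq_mul]
  ring

-- time product rule with the oscillatory factor
theorem dtE (lam : ℝ) (ψ : (Fin n → ℝ) → ℝ) {u : ℝ → (Fin n → ℝ) → ℂ} (hu : Sm u) :
    dt (fun t x => Complex.exp (Complex.I * (lam : ℂ) * ((ψ x + t : ℝ) : ℂ)) * u t x)
      = fun t x => Complex.exp (Complex.I * (lam : ℂ) * ((ψ x + t : ℝ) : ℂ)) *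
          (Complex.I * (lam : ℂ) * u t x + dt u t x) := by
  funext t x
  have harg : HasDerivAt (fun s : ℝ => Complex.I * (lam : ℂ) * ((ψ x + s : ℝ) : ℂ))
      (Complex.I * (lam : ℂ)) t := by
    have h0 : (fun s : ℝ => Complex.I * (lam : ℂ) * ((ψ x + s : ℝ) : ℂ))
        = fun s : ℝ => Complex.I * (lam : ℂ) * ((ψ x : ℝ) : ℂ) + Complex.I * (lam : ℂ) * (s : ℂ) := by
      funext s; push_cast; ring
    rw [h0]
    simpa using (((Complex.ofRealCLM.hasDerivAt (x := t)).const_mul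
      (Complex.I * (lam : ℂ))).const_add (Complex.I * (lam : ℂ) * ((ψ x : ℝ) : ℂ)))
  have hE := harg.cexp
  have hu' := (diffT hu t x).hasDerivAt
  have h := (hE.fun_mul hu').deriv
  show deriv (fun s => Complex.exp (Complex.I * (lam : ℂ) * ((ψ x + s : ℝ) : ℂ)) * u s x) t = _
  rw [h]
  show _ = Complex.exp _ * (Complex.I * (lam : ℂ) * u t x + deriv (fun s => u s x) t)
  ring

-- space product rule with the oscillatory factor
theorem pdE (lam : ℝ) {ψ : (Fin n → ℝ) → ℝ} (hψ : ContDiff ℝ ∞ ψ) (j : Fin n)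
    {u : ℝ → (Fin n → ℝ) → ℂ} (hu : Sm u) :
    pd j (fun t x => Complex.exp (Complex.I * (lam : ℂ) * ((ψ x + t : ℝ) : ℂ)) * u t x)
      = fun t x => Complex.exp (Complex.I * (lam : ℂ) * ((ψ x + t : ℝ) : ℂ)) *
          (Complex.I * (lam : ℂ) * (((pdR j ψ x : ℝ) : ℂ) * u t x)
            + pd j u t x) := by
  funext t x
  have hψ' : HasFDerivAt ψ (fderiv ℝ ψ x) x := ((hψ.differentiable (by norm_num)) x).hasFDerivAt
  have h0 : HasFDerivAt (fun y => ((ψ y + t : ℝ) : ℂ)) (Complex.ofRealCLM.comp (fderiv ℝ ψ x)) x :=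
    Complex.ofRealCLM.hasFDerivAt.comp x (hψ'.add_const t)
  have harg := h0.const_mul (Complex.I * (lam : ℂ))
  have hE := harg.cexp
  have hu' := (diffX hu t x).hasFDerivAt
  have h := (hE.fun_mul hu').fderiv
  show fderiv ℝ (fun y => Complex.exp (Complex.I * (lam : ℂ) * ((ψ y + t : ℝ) : ℂ)) * u t y) x
      (Pi.single j 1) = _
  rw [h]
  simp [pd, pdR, smul_eq_mul]
  ring

theorem sm_pdR {ψ : (Fin n → ℝ) → ℝ} (hψ : ContDiff ℝ ∞ ψ) (j : Fin n) :
    ContDiff ℝ ∞ (pdR j ψ) :=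
  (hψ.fderiv_right (by simp)).clm_apply contDiff_const

theorem lapE (lam : ℝ) {ψ : (Fin n → ℝ) → ℝ} (hψ : ContDiff ℝ ∞ ψ)
    {u : ℝ → (Fin n → ℝ) → ℂ} (hu : Sm u) (t : ℝ) (x : Fin n → ℝ) :
    lap (fun t x => Complex.exp (Complex.I * (lam : ℂ) * ((ψ x + t : ℝ) : ℂ)) * u t x) t x
      = Complex.exp (Complex.I * (lam : ℂ) * ((ψ x + t : ℝ) : ℂ)) *
          ((Complex.I * (lam : ℂ))^2 * ((gradNormSq ψ x : ℝ) : ℂ) * u t x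
            + Complex.I * (lam : ℂ) * ((lapR ψ x : ℝ) : ℂ) * u t x
            + 2 * (Complex.I * (lam : ℂ)) * ∑ j, ((pdR j ψ x : ℝ) : ℂ) * pd j u t x
            + lap u t x) := by
  have hg : ∀ j : Fin n, ContDiff ℝ ∞ (pdR j ψ) := sm_pdR hψ
  have step : ∀ j : Fin n,
      pd j (pd j (fun t x => Complex.exp (Complex.I * (lam : ℂ) * ((ψ x + t : ℝ) : ℂ)) * u t x)) t x
        = Complex.exp (Complex.I * (lam : ℂ) * ((ψ x + t : ℝ) : ℂ)) *
            ((Complex.I * (lam : ℂ))^2 * ((pdR j ψ x : ℝ) : ℂ)^2 * u t x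
              + Complex.I * (lam : ℂ) * ((pdR j (pdR j ψ) x : ℝ) : ℂ) * u t x
              + 2 * (Complex.I * (lam : ℂ)) * (((pdR j ψ x : ℝ) : ℂ) * pd j u t x)
              + pd j (pd j u) t x) := by
    intro j
    have h1 : Sm (fun t x => Complex.I * (lam : ℂ) * (((pdR j ψ x : ℝ) : ℂ) * u t x)) :=
      sm_cmul _ (sm_coeff (hg j) hu)
    have h2 : Sm (pd j u) := sm_pd hu j
    rw [pdE lam hψ j hu]
    rw [pdE lam hψ j (sm_add h1 h2)]
    rw [pd_addF j h1 h2, pd_cmulF j _ (sm_coeff (hg j) hu), pd_coeffF j (hg j) hu]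
    ring
  show (∑ j, pd j (pd j _) t x) = _
  rw [Finset.sum_congr rfl (fun j _ => step j), ← Finset.mul_sum]
  congr 1
  simp only [gradNormSq, lapR, lap, Complex.ofReal_sum, Complex.ofReal_pow, Finset.mul_sum,
    Finset.sum_mul, ← Finset.sum_add_distrib]

/-- Conjugation of the MGT operator `P` by the geometric optics factor `e^{iλ(ψ(x)+t)}`:
`P(e^{iλ(ψ(x)+t)} a) = e^{iλ(ψ(x)+t)}( iλ³ T₃a + λ² T₂a + iλ T₁a + Pa )`. -/
theorem mgt_conjugation_identity
    {n : ℕ} (hn : 1 ≤ n) (α c b : ℝ) (hb : 0 < b) (lam : ℝ)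
    (ψ : (Fin n → ℝ) → ℝ) (hψ : ContDiff ℝ ∞ ψ)
    (a : ℝ → (Fin n → ℝ) → ℂ)
    (ha : ContDiff ℝ ∞ (fun p : ℝ × (Fin n → ℝ) => a p.1 p.2)) :
    ∀ (t : ℝ) (x : Fin n → ℝ),
      MGT α c b
        (fun t x => Complex.exp (Complex.I * (lam : ℂ) * ((ψ x + t : ℝ) : ℂ)) * a t x) t x
      = Complex.exp (Complex.I * (lam : ℂ) * ((ψ x + t : ℝ) : ℂ)) *
          (Complex.I * (lam : ℂ) ^ 3 * T3 b ψ a t x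
            + (lam : ℂ) ^ 2 * T2 α c b ψ a t x
            + Complex.I * (lam : ℂ) * T1 α c b ψ a t x
            + MGT α c b a t x) := by
  intro t x
  have ha' : Sm a := ha
  have hF1 : Sm (fun t x => Complex.I * (lam : ℂ) * a t x + dt a t x) :=
    sm_add (sm_cmul _ ha') (sm_dt ha')
  have hdF1 : dt (fun t x => Complex.I * (lam : ℂ) * a t x + dt a t x)
      = fun t x => Complex.I * (lam : ℂ) * dt a t x + dt (dt a) t x := by
    simp only [dt_addF (sm_cmul (Complex.I * (lam : ℂ)) ha') (sm_dt ha'),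
      dt_cmulF (Complex.I * (lam : ℂ)) ha']
  have hF2 : Sm (fun t x => Complex.I * (lam : ℂ) * (Complex.I * (lam : ℂ) * a t x + dt a t x)
      + (Complex.I * (lam : ℂ) * dt a t x + dt (dt a) t x)) :=
    sm_add (sm_cmul _ hF1) (sm_add (sm_cmul _ (sm_dt ha')) (sm_dt (sm_dt ha')))
  have hdF2 : dt (fun t x => Complex.I * (lam : ℂ) * (Complex.I * (lam : ℂ) * a t x + dt a t x)
        + (Complex.I * (lam : ℂ) * dt a t x + dt (dt a) t x))
      = fun t x => Complex.I * (lam : ℂ) * (Complex.I * (lam : ℂ) * dt a t x + dt (dt a) t x)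
        + (Complex.I * (lam : ℂ) * dt (dt a) t x + dt (dt (dt a)) t x) := by
    simp only [dt_addF (sm_cmul (Complex.I * (lam : ℂ)) hF1)
        (sm_add (sm_cmul (Complex.I * (lam : ℂ)) (sm_dt ha')) (sm_dt (sm_dt ha'))),
      dt_cmulF (Complex.I * (lam : ℂ)) hF1, hdF1,
      dt_addF (sm_cmul (Complex.I * (lam : ℂ)) (sm_dt ha')) (sm_dt (sm_dt ha')),
      dt_cmulF (Complex.I * (lam : ℂ)) (sm_dt ha')]
  have e3 : ∀ j : Fin n, pd j (fun t x => Complex.I * (lam : ℂ) * a t x + dt a t x)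
      = fun t x => Complex.I * (lam : ℂ) * pd j a t x + pd j (dt a) t x := fun j => by
    simp only [pd_addF j (sm_cmul (Complex.I * (lam : ℂ)) ha') (sm_dt ha'),
      pd_cmulF j (Complex.I * (lam : ℂ)) ha']
  have e4 : ∀ j : Fin n,
      pd j (fun t x => Complex.I * (lam : ℂ) * pd j a t x + pd j (dt a) t x)
      = fun t x => Complex.I * (lam : ℂ) * pd j (pd j a) t x + pd j (pd j (dt a)) t x := fun j => by
    simp only [pd_addF j (sm_cmul (Complex.I * (lam : ℂ)) (sm_pd ha' j)) (sm_pd (sm_dt ha') j),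
      pd_cmulF j (Complex.I * (lam : ℂ)) (sm_pd ha' j)]
  have e7 : lap (fun t x => Complex.I * (lam : ℂ) * a t x + dt a t x) t x
      = Complex.I * (lam : ℂ) * lap a t x + lap (dt a) t x := by
    show (∑ j, pd j (pd j fun t x => Complex.I * (lam : ℂ) * a t x + dt a t x) t x) = _
    simp only [e3, e4, lap]
    rw [Finset.sum_add_distrib, ← Finset.mul_sum]
  have e5 : (∑ j, ((pdR j ψ x : ℝ) : ℂ) *
        (Complex.I * (lam : ℂ) * pd j a t x + pd j (dt a) t x))
      = Complex.I * (lam : ℂ) * (∑ j, ((pdR j ψ x : ℝ) : ℂ) * pd j a t x)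
        + ∑ j, ((pdR j ψ x : ℝ) : ℂ) * pd j (dt a) t x := by
    rw [Finset.mul_sum, ← Finset.sum_add_distrib]
    exact Finset.sum_congr rfl (fun j _ => by ring)
  have e6 : (∑ j, ((pdR j ψ x : ℝ) : ℂ) *
        ((b : ℂ) * pd j (dt a) t x + (c : ℂ) ^ 2 * pd j a t x))
      = (b : ℂ) * (∑ j, ((pdR j ψ x : ℝ) : ℂ) * pd j (dt a) t x)
        + (c : ℂ) ^ 2 * ∑ j, ((pdR j ψ x : ℝ) : ℂ) * pd j a t x := by
    rw [Finset.mul_sum, Finset.mul_sum, ← Finset.sum_add_distrib]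
    exact Finset.sum_congr rfl (fun j _ => by ring)
  simp only [MGT]
  rw [dtE lam ψ ha']
  rw [lapE lam hψ ha']
  rw [lapE lam hψ hF1]
  rw [dtE lam ψ hF1]
  simp only [hdF1]
  rw [dtE lam ψ hF2]
  simp only [hdF2, e3, e7, e5]
  simp only [T1, T2, T3]
  rw [e6]
  push_cast
  have hI2 : (Complex.I : ℂ) ^ 2 = -1 := Complex.I_sq
  have hI3 : (Complex.I : ℂ) ^ 3 = -Complex.I := by
    rw [pow_succ, hI2]; ring
  ring_nf
  simp only [hI2, hI3]
  ring
end
end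

section
/- Let n ≥ 1, b > 0, let w ∈ ℝⁿ be a unit vector and set ψ(x) = (1/√b) w·x. Let a₀, a₁, a₂ : ℝ × ℝⁿ → ℂ be continuously differentiable and β, κ : ℝⁿ → ℝ with β(x) + κ(x)/b = 0 for all x. For λ > 0 define u₁ = e^{iλ(ψ(x)+t)} a₁, u₂ = e^{iλ(ψ(x)+t)} a₂, and u₀ = e^{−2iλ(ψ(x)+t)} a₀. Then for every (t,x) ∈ ℝ × ℝⁿ, lim_{λ → ∞} λ^{−2} [ β(x) ∂_t u₁ ∂_t u₂ ∂_t u₀ + κ(x) (∇u₁·∇u₂) ∂_t u₀ ](t,x) = 2 ( β(x) ∂_t(a₁ a₂)(t,x) + κ(x) b^{−1/2} w·∇(a₁ a₂)(t,x) ) a₀(t,x), where ∇u₁·∇u₂ = Σ_{j=1}^{n} ∂_{x_j}u₁ ∂_{x_j}u₂ denotes the bilinear (non-Hermitian) dot product of the spatial gradients. -/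
open scoped BigOperators
open Filter

noncomputable section

/-- Geometric optics ansatz `e^{iλ(ψ(x)+t)} a(t,x)`. -/
def GO {n : ℕ} (lam : ℝ) (ψ : (Fin n → ℝ) → ℝ) (a : ℝ → (Fin n → ℝ) → ℂ) :
    ℝ → (Fin n → ℝ) → ℂ :=
  fun t x => Complex.exp (Complex.I * (lam : ℂ) * ((ψ x + t : ℝ) : ℂ)) * a t x

/-- The linear plane-wave phase `ψ(x) = (1/√b) w·x`. -/
def planePhase {n : ℕ} (b : ℝ) (w : Fin n → ℝ) : (Fin n → ℝ) → ℝ :=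
  fun x => (1 / Real.sqrt b) * ∑ j, w j * x j

/-- CLM version of planePhase -/
def phaseCLM {n : ℕ} (b : ℝ) (w : Fin n → ℝ) : (Fin n → ℝ) →L[ℝ] ℝ :=
  ∑ j, ((1 / Real.sqrt b) * w j) • (ContinuousLinearMap.proj j)

lemma phaseCLM_apply {n : ℕ} (b : ℝ) (w : Fin n → ℝ) (y : Fin n → ℝ) :
    phaseCLM b w y = planePhase b w y := by
  simp [phaseCLM, planePhase, ContinuousLinearMap.sum_apply, Finset.mul_sum, mul_assoc]

lemma phaseCLM_single {n : ℕ} (b : ℝ) (w : Fin n → ℝ) (j : Fin n) :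
    phaseCLM b w (Pi.single j 1) = w j / Real.sqrt b := by
  simp [phaseCLM, ContinuousLinearMap.sum_apply, Pi.single_apply]
  ring

lemma hasFDerivAt_planePhase {n : ℕ} (b : ℝ) (w : Fin n → ℝ) (x : Fin n → ℝ) :
    HasFDerivAt (planePhase b w) (phaseCLM b w) x := by
  have : planePhase b w = fun y => phaseCLM b w y := by
    funext y; rw [phaseCLM_apply]
  rw [this]
  exact (phaseCLM b w).hasFDerivAt

lemma aux_diff_t {n : ℕ} {a : ℝ → (Fin n → ℝ) → ℂ}
    (ha : ContDiff ℝ 1 (fun p : ℝ × (Fin n → ℝ) => a p.1 p.2)) (t : ℝ) (x : Fin n → ℝ) :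
    DifferentiableAt ℝ (fun s => a s x) t := by
  have h := (ha.differentiable one_ne_zero).differentiableAt (x := (t, x))
  exact h.comp t ((differentiableAt_fun_id : DifferentiableAt ℝ (fun s : ℝ => s) t).prodMk (differentiableAt_const x))

lemma aux_diff_x {n : ℕ} {a : ℝ → (Fin n → ℝ) → ℂ}
    (ha : ContDiff ℝ 1 (fun p : ℝ × (Fin n → ℝ) => a p.1 p.2)) (t : ℝ) (x : Fin n → ℝ) :
    DifferentiableAt ℝ (fun y => a t y) x := by
  have h := (ha.differentiable one_ne_zero).differentiableAt (x := (t, x))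
  exact h.comp x ((differentiableAt_const t).prodMk differentiableAt_fun_id)

lemma dt_GO_eq {n : ℕ} (lam : ℝ) (ψ : (Fin n → ℝ) → ℝ) {a : ℝ → (Fin n → ℝ) → ℂ}
    (ha : ContDiff ℝ 1 (fun p : ℝ × (Fin n → ℝ) => a p.1 p.2)) (t : ℝ) (x : Fin n → ℝ) :
    dt (GO lam ψ a) t x
      = Complex.exp (Complex.I * (lam : ℂ) * ((ψ x + t : ℝ) : ℂ)) *
          (Complex.I * (lam : ℂ) * a t x + dt a t x) := by
  have hph : HasDerivAt (fun s : ℝ => ((ψ x + s : ℝ) : ℂ)) 1 t := by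
    have h : HasDerivAt (fun s : ℝ => ψ x + s) 1 t := (hasDerivAt_id t).const_add (ψ x)
    simpa using h.ofReal_comp
  have h2 : HasDerivAt (fun s : ℝ => Complex.I * (lam : ℂ) * ((ψ x + s : ℝ) : ℂ))
      (Complex.I * (lam : ℂ)) t := by
    simpa using hph.const_mul (Complex.I * (lam : ℂ))
  have h3 := h2.cexp
  have h4 : HasDerivAt (fun s => a s x) (dt a t x) t := (aux_diff_t ha t x).hasDerivAt
  have h5 := h3.mul h4
  have : dt (GO lam ψ a) t x
      = Complex.exp (Complex.I * (lam : ℂ) * ((ψ x + t : ℝ) : ℂ)) * (Complex.I * (lam : ℂ)) * a t x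
        + Complex.exp (Complex.I * (lam : ℂ) * ((ψ x + t : ℝ) : ℂ)) * dt a t x := h5.deriv
  rw [this]; ring

lemma pd_GO_eq {n : ℕ} {b : ℝ} (hb : 0 < b) (lam : ℝ) (w : Fin n → ℝ)
    {a : ℝ → (Fin n → ℝ) → ℂ}
    (ha : ContDiff ℝ 1 (fun p : ℝ × (Fin n → ℝ) => a p.1 p.2)) (t : ℝ) (x : Fin n → ℝ)
    (j : Fin n) :
    pd j (GO lam (planePhase b w) a) t x
      = Complex.exp (Complex.I * (lam : ℂ) * ((planePhase b w x + t : ℝ) : ℂ)) *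
          (Complex.I * (lam : ℂ) * ((w j / Real.sqrt b : ℝ) : ℂ) * a t x + pd j a t x) := by
  have hψ := hasFDerivAt_planePhase b w x
  have h1 : HasFDerivAt (fun y => ((planePhase b w y + t : ℝ) : ℂ))
      (Complex.ofRealCLM.comp (phaseCLM b w)) x :=
    Complex.ofRealCLM.hasFDerivAt.comp x (hψ.add_const t)
  have h2 := h1.const_mul (Complex.I * (lam : ℂ))
  have h3 := h2.cexp
  have h4 : HasFDerivAt (fun y => a t y) (fderiv ℝ (fun y => a t y) x) x :=
    (aux_diff_x ha t x).hasFDerivAt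
  have h5 := h3.fun_mul h4
  have hval := h5.fderiv
  show (fderiv ℝ (fun y => GO lam (planePhase b w) a t y) x) (Pi.single j 1) = _
  rw [show (fun y => GO lam (planePhase b w) a t y)
      = fun y => Complex.exp (Complex.I * (lam : ℂ) * ((planePhase b w y + t : ℝ) : ℂ)) * a t y
      from rfl, hval]
  simp only [ContinuousLinearMap.add_apply, ContinuousLinearMap.smul_apply,
    ContinuousLinearMap.coe_comp', Function.comp_apply, Complex.ofRealCLM_apply,
    phaseCLM_single, smul_eq_mul, pd]
  ring

lemma dt_mul {n : ℕ} {a1 a2 : ℝ → (Fin n → ℝ) → ℂ}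
    (ha1 : ContDiff ℝ 1 (fun p : ℝ × (Fin n → ℝ) => a1 p.1 p.2))
    (ha2 : ContDiff ℝ 1 (fun p : ℝ × (Fin n → ℝ) => a2 p.1 p.2)) (t : ℝ) (x : Fin n → ℝ) :
    dt (fun t x => a1 t x * a2 t x) t x = dt a1 t x * a2 t x + a1 t x * dt a2 t x := by
  exact deriv_mul (aux_diff_t ha1 t x) (aux_diff_t ha2 t x)

lemma pd_mul {n : ℕ} {a1 a2 : ℝ → (Fin n → ℝ) → ℂ}
    (ha1 : ContDiff ℝ 1 (fun p : ℝ × (Fin n → ℝ) => a1 p.1 p.2))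
    (ha2 : ContDiff ℝ 1 (fun p : ℝ × (Fin n → ℝ) => a2 p.1 p.2)) (t : ℝ) (x : Fin n → ℝ)
    (j : Fin n) :
    pd j (fun t x => a1 t x * a2 t x) t x = a1 t x * pd j a2 t x + a2 t x * pd j a1 t x := by
  show (fderiv ℝ (fun y => a1 t y * a2 t y) x) (Pi.single j 1) = _
  rw [fderiv_fun_mul (aux_diff_x ha1 t x) (aux_diff_x ha2 t x)]
  simp [pd]


/-- λ²-order limit of the second-linearization integrand, assuming `β + κ/b = 0`:
`lim_{λ→∞} λ^{−2}[ β ∂_tu₁ ∂_tu₂ ∂_tu₀ + κ (∇u₁·∇u₂) ∂_tu₀ ]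
  = 2( β ∂_t(a₁a₂) + κ b^{−1/2} w·∇(a₁a₂) ) a₀`. -/
theorem lambda_squared_limit
    {n : ℕ} (hn : 1 ≤ n) (b : ℝ) (hb : 0 < b)
    (w : Fin n → ℝ) (hw : ∑ j, w j ^ 2 = 1)
    (a0 a1 a2 : ℝ → (Fin n → ℝ) → ℂ)
    (ha0 : ContDiff ℝ 1 (fun p : ℝ × (Fin n → ℝ) => a0 p.1 p.2))
    (ha1 : ContDiff ℝ 1 (fun p : ℝ × (Fin n → ℝ) => a1 p.1 p.2))
    (ha2 : ContDiff ℝ 1 (fun p : ℝ × (Fin n → ℝ) => a2 p.1 p.2))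
    (β κ : (Fin n → ℝ) → ℝ) (hβκ : ∀ x, β x + κ x / b = 0) :
    ∀ (t : ℝ) (x : Fin n → ℝ),
      Tendsto
        (fun lam : ℝ =>
          ((lam : ℂ) ^ 2)⁻¹ *
            (((β x : ℝ) : ℂ) * dt (GO lam (planePhase b w) a1) t x
                * dt (GO lam (planePhase b w) a2) t x
                * dt (GO (-2 * lam) (planePhase b w) a0) t x
              + ((κ x : ℝ) : ℂ) *
                (∑ j, pd j (GO lam (planePhase b w) a1) t x
                    * pd j (GO lam (planePhase b w) a2) t x)
                * dt (GO (-2 * lam) (planePhase b w) a0) t x))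
        atTop
        (nhds (2 * (((β x : ℝ) : ℂ) * dt (fun t x => a1 t x * a2 t x) t x
            + ((κ x : ℝ) : ℂ) * (((Real.sqrt b)⁻¹ : ℝ) : ℂ) *
                ∑ j, ((w j : ℝ) : ℂ) * pd j (fun t x => a1 t x * a2 t x) t x)
          * a0 t x)) := by
  intro t x
  set A0 := a0 t x with hA0
  set A1 := a1 t x with hA1
  set A2 := a2 t x with hA2
  set D0 := dt a0 t x with hD0
  set D1 := dt a1 t x with hD1
  set D2 := dt a2 t x with hD2
  set B1 : Fin n → ℂ := fun j => pd j a1 t x with hB1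
  set B2 : Fin n → ℂ := fun j => pd j a2 t x with hB2
  set c : Fin n → ℂ := fun j => ((w j / Real.sqrt b : ℝ) : ℂ) with hc
  set βc : ℂ := ((β x : ℝ) : ℂ) with hβc
  set κc : ℂ := ((κ x : ℝ) : ℂ) with hκc
  set S1 : ℂ := ∑ j, c j * B1 j with hS1
  set S2 : ℂ := ∑ j, c j * B2 j with hS2
  set T : ℂ := ∑ j, B1 j * B2 j with hT
  have hsqb : Real.sqrt b ≠ 0 := by positivity
  have hbC : (b : ℂ) ≠ 0 := by exact_mod_cast hb.ne'
  -- the key constants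
  set L : ℂ := 2 * (βc * (D1 * A2 + A1 * D2) + κc * (A2 * S1 + A1 * S2)) * A0 with hL
  set C1 : ℂ := Complex.I * βc * (A1 * D2 + D1 * A2) * D0 - 2 * Complex.I * βc * D1 * D2 * A0
      + Complex.I * κc * (A1 * S2 + A2 * S1) * D0 - 2 * Complex.I * κc * T * A0 with hC1
  set C0 : ℂ := βc * D1 * D2 * D0 + κc * T * D0 with hC0
  have hβκ' : βc + κc / (b : ℂ) = 0 := by
    have := hβκ x
    rw [hβc, hκc]
    exact_mod_cast this
  have hsqbC : ((Real.sqrt b : ℝ) : ℂ) ≠ 0 := by exact_mod_cast hsqb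
  -- the target limit equals L
  have hLeq : (2 * (((β x : ℝ) : ℂ) * dt (fun t x => a1 t x * a2 t x) t x
            + ((κ x : ℝ) : ℂ) * (((Real.sqrt b)⁻¹ : ℝ) : ℂ) *
                ∑ j, ((w j : ℝ) : ℂ) * pd j (fun t x => a1 t x * a2 t x) t x)
          * a0 t x) = L := by
    rw [dt_mul ha1 ha2 t x]
    have hsum : (∑ j, ((w j : ℝ) : ℂ) * pd j (fun t x => a1 t x * a2 t x) t x)
        = ((Real.sqrt b : ℝ) : ℂ) * (A2 * S1 + A1 * S2) := by
      rw [hS1, hS2, Finset.mul_sum, Finset.mul_sum, ← Finset.sum_add_distrib,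
        Finset.mul_sum]
      refine Finset.sum_congr rfl fun j _ => ?_
      rw [pd_mul ha1 ha2 t x j]
      have hcj : c j = ((w j : ℝ) : ℂ) / ((Real.sqrt b : ℝ) : ℂ) := by
        rw [hc]; push_cast; ring
      rw [hcj]
      field_simp
      ring
    rw [hsum, hL]
    have hinv : (((Real.sqrt b)⁻¹ : ℝ) : ℂ) * ((Real.sqrt b : ℝ) : ℂ) = 1 := by
      rw [← Complex.ofReal_mul, inv_mul_cancel₀ hsqb, Complex.ofReal_one]
    linear_combination (2 * κc * (A2 * S1 + A1 * S2) * A0) * hinv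
  rw [hLeq]
  -- sum of c j ^ 2
  have hc2 : (∑ j, c j ^ 2) = 1 / (b : ℂ) := by
    have h1 : ∀ j, c j ^ 2 = (((w j ^ 2 / b : ℝ)) : ℂ) := by
      intro j
      rw [hc]
      rw [show ((fun j => ((w j / Real.sqrt b : ℝ) : ℂ)) j) = ((w j / Real.sqrt b : ℝ) : ℂ) from rfl]
      rw [← Complex.ofReal_pow, div_pow, Real.sq_sqrt hb.le]
    rw [Finset.sum_congr rfl fun j _ => h1 j, ← Complex.ofReal_sum]
    have h2 : (∑ j, (w j ^ 2 / b) : ℝ) = 1 / b := by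
      rw [← Finset.sum_div, hw]
    rw [h2]; push_cast; ring
  -- convergence of the model function
  have hz : Tendsto (fun lam : ℝ => ((lam : ℂ))⁻¹) atTop (nhds 0) := by
    have h1 : Tendsto (fun lam : ℝ => lam⁻¹) atTop (nhds 0) := tendsto_inv_atTop_zero
    have h2 := (Complex.continuous_ofReal.tendsto 0).comp h1
    simpa [Function.comp_def] using h2
  have hmodel : Tendsto (fun lam : ℝ => L + C1 * ((lam : ℂ))⁻¹ + C0 * ((lam : ℂ))⁻¹ ^ 2)
      atTop (nhds L) := by
    have := (tendsto_const_nhds (x := L) (f := atTop (α := ℝ))).add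
      ((hz.const_mul C1).add ((hz.pow 2).const_mul C0))
    simp only [mul_zero, add_zero, zero_pow, ne_eq, OfNat.ofNat_ne_zero,
      not_false_eq_true] at this
    convert this using 2 <;> ring
  refine Tendsto.congr' ?_ hmodel
  filter_upwards [eventually_gt_atTop (0 : ℝ)] with lam hlam
  have hlamC : ((lam : ℂ)) ≠ 0 := by exact_mod_cast hlam.ne'
  -- rewrite derivatives
  rw [dt_GO_eq lam (planePhase b w) ha1 t x, dt_GO_eq lam (planePhase b w) ha2 t x,
    dt_GO_eq (-2 * lam) (planePhase b w) ha0 t x]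
  simp only [pd_GO_eq hb lam w ha1 t x, pd_GO_eq hb lam w ha2 t x]
  set E1 : ℂ := Complex.exp (Complex.I * (lam : ℂ) * ((planePhase b w x + t : ℝ) : ℂ)) with hE1
  set E0 : ℂ := Complex.exp (Complex.I * ((-2 * lam : ℝ) : ℂ) * ((planePhase b w x + t : ℝ) : ℂ)) with hE0
  have hE : E1 * E1 * E0 = 1 := by
    rw [hE1, hE0, ← Complex.exp_add, ← Complex.exp_add, ← Complex.exp_zero]
    congr 1
    push_cast
    ring
  have hneg : ((-2 * lam : ℝ) : ℂ) = -2 * (lam : ℂ) := by push_cast; ring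
  rw [hneg]
  set P1 : ℂ := Complex.I * (lam : ℂ) * A1 + D1 with hP1
  set P2 : ℂ := Complex.I * (lam : ℂ) * A2 + D2 with hP2
  set Q : ℂ := Complex.I * (-2 * (lam : ℂ)) * A0 + D0 with hQ
  -- the gradient sum
  have hgrad : (∑ j, (E1 * (Complex.I * (lam : ℂ) * c j * A1 + B1 j))
        * (E1 * (Complex.I * (lam : ℂ) * c j * A2 + B2 j)))
      = E1 * E1 * ((Complex.I * (lam : ℂ)) ^ 2 * A1 * A2 * (1 / (b : ℂ))
          + Complex.I * (lam : ℂ) * (A1 * S2 + A2 * S1) + T) := by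
    have step1 : (∑ j, (E1 * (Complex.I * (lam : ℂ) * c j * A1 + B1 j))
        * (E1 * (Complex.I * (lam : ℂ) * c j * A2 + B2 j)))
        = ∑ j, ((E1 * E1 * ((Complex.I * (lam : ℂ)) ^ 2 * A1 * A2)) * (c j ^ 2)
            + (E1 * E1 * (Complex.I * (lam : ℂ) * A1)) * (c j * B2 j)
            + (E1 * E1 * (Complex.I * (lam : ℂ) * A2)) * (c j * B1 j)
            + (E1 * E1) * (B1 j * B2 j)) :=
      Finset.sum_congr rfl fun j _ => by ring
    rw [step1, Finset.sum_add_distrib, Finset.sum_add_distrib, Finset.sum_add_distrib,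
      ← Finset.mul_sum, ← Finset.mul_sum, ← Finset.mul_sum, ← Finset.mul_sum,
      hc2, ← hS1, ← hS2, ← hT]
    ring
  rw [hgrad]
  -- collapse exponentials
  have hmain : βc * (E1 * P1) * (E1 * P2) * (E0 * Q)
      + κc * (E1 * E1 * ((Complex.I * (lam : ℂ)) ^ 2 * A1 * A2 * (1 / (b : ℂ))
          + Complex.I * (lam : ℂ) * (A1 * S2 + A2 * S1) + T)) * (E0 * Q)
      = (E1 * E1 * E0) * (βc * P1 * P2 * Q
          + κc * ((Complex.I * (lam : ℂ)) ^ 2 * A1 * A2 * (1 / (b : ℂ))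
              + Complex.I * (lam : ℂ) * (A1 * S2 + A2 * S1) + T) * Q) := by ring
  rw [hmain, hE, one_mul]
  -- polynomial identity
  have hI2 : Complex.I ^ 2 = -1 := Complex.I_sq
  have hpoly : βc * P1 * P2 * Q
      + κc * ((Complex.I * (lam : ℂ)) ^ 2 * A1 * A2 * (1 / (b : ℂ))
          + Complex.I * (lam : ℂ) * (A1 * S2 + A2 * S1) + T) * Q
      = (lam : ℂ) ^ 2 * L + (lam : ℂ) * C1 + C0 := by
    rw [hP1, hP2, hQ, hL, hC1, hC0]
    linear_combination (-2 * Complex.I ^ 3 * (lam : ℂ) ^ 3 * A1 * A2 * A0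
        - (lam : ℂ) ^ 2 * A1 * A2 * D0) * hβκ'
      + ((lam : ℂ) ^ 2 * (βc * A1 * A2 * D0 + κc * A1 * A2 * D0 / (b : ℂ)
          - 2 * βc * (A1 * D2 + D1 * A2) * A0 - 2 * κc * (A1 * S2 + A2 * S1) * A0)) * hI2
  rw [hpoly]
  field_simp
end
end

section
/- Let n ≥ 1 and T' > 0, let C be an n × n complex matrix with Cᵀ = C, and let D : [0,T'] → M_n(ℂ) be continuous with D(τ)ᵀ = D(τ) for all τ. If H : [0,T'] → M_n(ℂ) is differentiable, satisfies H'(τ) = −H(τ)·C·H(τ) − D(τ) for all τ ∈ [0,T'], and H(0)ᵀ = H(0), then H(τ)ᵀ = H(τ) for all τ ∈ [0,T']. -/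
open Matrix

noncomputable section

attribute [local instance] Matrix.normedAddCommGroup Matrix.normedSpace

private lemma norm_matmul_le {n : ℕ} (A B : Matrix (Fin n) (Fin n) ℂ) :
    ‖A * B‖ ≤ n * ‖A‖ * ‖B‖ := by
  have hnn : (0:ℝ) ≤ n * ‖A‖ * ‖B‖ := by positivity
  rw [show ‖A * B‖ = ‖(fun i j => (A * B) i j : Matrix (Fin n) (Fin n) ℂ)‖ from rfl]
  refine (pi_norm_le_iff_of_nonneg hnn).2 fun i => (pi_norm_le_iff_of_nonneg hnn).2 fun j => ?_
  calc ‖(A * B) i j‖ = ‖∑ k, A i k * B k j‖ := by rw [Matrix.mul_apply]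
    _ ≤ ∑ k, ‖A i k * B k j‖ := norm_sum_le _ _
    _ ≤ ∑ _k : Fin n, ‖A‖ * ‖B‖ := by
        refine Finset.sum_le_sum fun k _ => ?_
        rw [norm_mul]
        exact mul_le_mul (A.norm_entry_le_entrywise_sup_norm)
          (B.norm_entry_le_entrywise_sup_norm) (norm_nonneg _) (norm_nonneg _)
    _ = n * ‖A‖ * ‖B‖ := by simp [Finset.sum_const, mul_assoc]

private lemma hasDerivWithinAt_transpose {n : ℕ} {H : ℝ → Matrix (Fin n) (Fin n) ℂ}
    {H' : Matrix (Fin n) (Fin n) ℂ} {s : Set ℝ} {x : ℝ}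
    (h : HasDerivWithinAt H H' s x) :
    HasDerivWithinAt (fun τ => (H τ)ᵀ) H'ᵀ s x := by
  exact ((Matrix.transposeLinearEquiv (Fin n) (Fin n) ℝ ℂ).toLinearMap.toContinuousLinearMap
    |>.hasFDerivAt.comp_hasDerivWithinAt x h :)

/-- Symmetry is preserved for the matrix Riccati equation `H' = −HCH − D` with symmetric
`C` and `D(τ)`: a solution with symmetric initial value stays symmetric. -/
theorem riccati_symmetry
    {n : ℕ} (hn : 1 ≤ n) (T' : ℝ) (hT' : 0 < T')
    (C : Matrix (Fin n) (Fin n) ℂ) (hC : Cᵀ = C)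
    (D : ℝ → Matrix (Fin n) (Fin n) ℂ)
    (hD : ContinuousOn D (Set.Icc 0 T'))
    (hDsymm : ∀ τ ∈ Set.Icc (0 : ℝ) T', (D τ)ᵀ = D τ)
    (H : ℝ → Matrix (Fin n) (Fin n) ℂ)
    (hH : ∀ τ ∈ Set.Icc (0 : ℝ) T',
      HasDerivWithinAt H (-(H τ * C * H τ) - D τ) (Set.Icc 0 T') τ)
    (h0 : (H 0)ᵀ = H 0) :
    ∀ τ ∈ Set.Icc (0 : ℝ) T', (H τ)ᵀ = H τ := by
  set G : ℝ → Matrix (Fin n) (Fin n) ℂ := fun τ => (H τ)ᵀ - H τ with hG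
  set G' : ℝ → Matrix (Fin n) (Fin n) ℂ :=
    fun τ => -((H τ)ᵀ * C * G τ + G τ * C * H τ) with hG'
  -- derivative of G
  have hGderiv : ∀ τ ∈ Set.Icc (0 : ℝ) T',
      HasDerivWithinAt G (G' τ) (Set.Icc 0 T') τ := by
    intro τ hτ
    have h1 := (hasDerivWithinAt_transpose (hH τ hτ)).sub (hH τ hτ)
    convert h1 using 1
    · rfl
    · rfl
    · rfl
    · rfl
    simp only [hG', hG]
    rw [Matrix.transpose_sub, Matrix.transpose_neg, Matrix.transpose_mul,
      Matrix.transpose_mul, hC, hDsymm τ hτ]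
    noncomm_ring
  have hHcont : ContinuousOn H (Set.Icc 0 T') :=
    fun τ hτ => (hH τ hτ).continuousWithinAt
  have hGcont : ContinuousOn G (Set.Icc 0 T') :=
    fun τ hτ => (hGderiv τ hτ).continuousWithinAt
  obtain ⟨M, hM⟩ := isCompact_Icc.exists_bound_of_continuousOn hHcont
  have hM0 : 0 ≤ M := (norm_nonneg _).trans (hM 0 ⟨le_rfl, le_of_lt hT'⟩)
  set K : ℝ := 2 * n * (n * ‖C‖ * M) with hK
  have hbound : ∀ τ ∈ Set.Ico (0:ℝ) T', ‖G' τ‖ ≤ K * ‖G τ‖ + 0 := by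
    intro τ hτ
    have hτ' : τ ∈ Set.Icc (0:ℝ) T' := ⟨hτ.1, le_of_lt hτ.2⟩
    have hHn : ‖H τ‖ ≤ M := hM τ hτ'
    have hHtn : ‖(H τ)ᵀ‖ ≤ M := by
      simpa using (hM τ hτ')
    have e1 : ‖(H τ)ᵀ * C * G τ‖ ≤ n * (n * ‖C‖ * M) * ‖G τ‖ := by
      calc ‖(H τ)ᵀ * C * G τ‖ ≤ n * ‖(H τ)ᵀ * C‖ * ‖G τ‖ := norm_matmul_le _ _
        _ ≤ n * (n * ‖C‖ * M) * ‖G τ‖ := by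
            refine mul_le_mul_of_nonneg_right (mul_le_mul_of_nonneg_left ?_ (by positivity))
              (norm_nonneg _)
            calc ‖(H τ)ᵀ * C‖ ≤ n * ‖(H τ)ᵀ‖ * ‖C‖ := norm_matmul_le _ _
              _ ≤ n * M * ‖C‖ := by
                  refine mul_le_mul_of_nonneg_right
                    (mul_le_mul_of_nonneg_left hHtn (by positivity)) (norm_nonneg _)
              _ = n * ‖C‖ * M := by ring
    have e2 : ‖G τ * C * H τ‖ ≤ n * (n * ‖C‖ * M) * ‖G τ‖ := by
      calc ‖G τ * C * H τ‖ ≤ n * ‖G τ * C‖ * ‖H τ‖ := norm_matmul_le _ _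
        _ ≤ n * (n * ‖G τ‖ * ‖C‖) * M := by
            refine mul_le_mul ?_ hHn (norm_nonneg _) (by positivity)
            exact mul_le_mul_of_nonneg_left (norm_matmul_le _ _) (by positivity)
        _ = n * (n * ‖C‖ * M) * ‖G τ‖ := by ring
    calc ‖G' τ‖ = ‖(H τ)ᵀ * C * G τ + G τ * C * H τ‖ := by simp only [hG', norm_neg]
      _ ≤ ‖(H τ)ᵀ * C * G τ‖ + ‖G τ * C * H τ‖ := norm_add_le _ _
      _ ≤ n * (n * ‖C‖ * M) * ‖G τ‖ + n * (n * ‖C‖ * M) * ‖G τ‖ := add_le_add e1 e2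
      _ = K * ‖G τ‖ + 0 := by rw [hK]; ring
  have hG0 : ‖G 0‖ ≤ 0 := by simp [hG, h0]
  have hderiv' : ∀ τ ∈ Set.Ico (0:ℝ) T',
      HasDerivWithinAt G (G' τ) (Set.Ici τ) τ := by
    intro τ hτ
    have h1 := (hGderiv τ ⟨hτ.1, le_of_lt hτ.2⟩).mono
      (Set.Icc_subset_Icc_left hτ.1 : Set.Icc τ T' ⊆ Set.Icc 0 T')
    exact h1.mono_of_mem_nhdsWithin (Icc_mem_nhdsGE_of_mem ⟨le_rfl, hτ.2⟩)
  have key := norm_le_gronwallBound_of_norm_deriv_right_le hGcont hderiv' hG0 hbound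
  intro τ hτ
  have := key τ hτ
  rw [gronwallBound_ε0] at this
  simp only [zero_mul] at this
  have : G τ = 0 := norm_le_zero_iff.1 (by simpa using this)
  have := sub_eq_zero.1 this
  exact this
end
end

section
/- Let n ≥ 1, let J ⊆ ℝ be an interval containing τ₀, let C be an n × n matrix with real entries and Cᵀ = C, and let D : J → M_n(ℂ) take values in matrices with real entries satisfying D(τ)ᵀ = D(τ). Let Y, Z : J → M_n(ℂ) be differentiable with Y'(τ) = C·Z(τ) and Z'(τ) = −D(τ)·Y(τ) on J, and suppose Y(τ) is invertible for every τ ∈ J. Then for every τ ∈ J, Z(τ)Y(τ)⁻¹ − (Z(τ)Y(τ)⁻¹)ᴴ = (Y(τ)ᴴ)⁻¹ · ( Y(τ₀)ᴴ Z(τ₀) − Z(τ₀)ᴴ Y(τ₀) ) · Y(τ)⁻¹. -/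
open Matrix

noncomputable section

attribute [local instance] Matrix.normedAddCommGroup Matrix.normedSpace

/-- Conjugate transpose as a real-linear map on complex matrices. -/
def ctLM (n : ℕ) : Matrix (Fin n) (Fin n) ℂ →ₗ[ℝ] Matrix (Fin n) (Fin n) ℂ where
  toFun A := Aᴴ
  map_add' A B := Matrix.conjTranspose_add A B
  map_smul' r A := by
    simp [Matrix.conjTranspose_smul]

/-- Left multiplication as a continuous bilinear map on complex matrices. -/
def mulCLM (n : ℕ) : Matrix (Fin n) (Fin n) ℂ →L[ℝ]
    Matrix (Fin n) (Fin n) ℂ →L[ℝ] Matrix (Fin n) (Fin n) ℂ :=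
  LinearMap.toContinuousLinearMap
    { toFun := fun A => LinearMap.toContinuousLinearMap (LinearMap.mulLeft ℝ A)
      map_add' := fun A B => by ext M; simp [add_mul]
      map_smul' := fun r A => by ext M; simp [smul_mul_assoc] }

lemma hasDerivWithinAt_conjTranspose {n : ℕ} {f : ℝ → Matrix (Fin n) (Fin n) ℂ}
    {f' : Matrix (Fin n) (Fin n) ℂ} {s : Set ℝ} {x : ℝ}
    (hf : HasDerivWithinAt f f' s x) :
    HasDerivWithinAt (fun τ => (f τ)ᴴ) f'ᴴ s x := by
  have := (LinearMap.toContinuousLinearMap (ctLM n)).hasFDerivAt.comp_hasDerivWithinAt x hf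
  exact this

lemma hasDerivWithinAt_matrix_mul {n : ℕ} {A B : ℝ → Matrix (Fin n) (Fin n) ℂ}
    {A' B' : Matrix (Fin n) (Fin n) ℂ} {s : Set ℝ} {x : ℝ}
    (hA : HasDerivWithinAt A A' s x) (hB : HasDerivWithinAt B B' s x) :
    HasDerivWithinAt (fun τ => A τ * B τ) (A' * B x + A x * B') s x := by
  have := (mulCLM n).hasDerivWithinAt_of_bilinear hA hB
  rw [add_comm]
  exact this

/-- For the linear system `Y' = CZ`, `Z' = −DY` with `C`, `D(τ)` real symmetric and `Y(τ)`
invertible on the interval `J ∋ τ₀`, the anti-Hermitian part of `H = ZY⁻¹` satisfies the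
congruence identity `H − Hᴴ = (Yᴴ)⁻¹ (Y(τ₀)ᴴZ(τ₀) − Z(τ₀)ᴴY(τ₀)) Y⁻¹`. -/
theorem antihermitian_part_congruence
    {n : ℕ} (hn : 1 ≤ n) (J : Set ℝ) (hJ : J.OrdConnected)
    (τ₀ : ℝ) (hτ₀ : τ₀ ∈ J)
    (C : Matrix (Fin n) (Fin n) ℂ)
    (hCre : ∀ i j, (C i j).im = 0) (hCsymm : Cᵀ = C)
    (D : ℝ → Matrix (Fin n) (Fin n) ℂ)
    (hDre : ∀ τ ∈ J, ∀ i j, (D τ i j).im = 0)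
    (hDsymm : ∀ τ ∈ J, (D τ)ᵀ = D τ)
    (Y Z : ℝ → Matrix (Fin n) (Fin n) ℂ)
    (hY : ∀ τ ∈ J, HasDerivWithinAt Y (C * Z τ) J τ)
    (hZ : ∀ τ ∈ J, HasDerivWithinAt Z (-(D τ * Y τ)) J τ)
    (hYinv : ∀ τ ∈ J, IsUnit (Y τ)) :
    ∀ τ ∈ J,
      Z τ * (Y τ)⁻¹ - (Z τ * (Y τ)⁻¹)ᴴ
        = ((Y τ)ᴴ)⁻¹ * ((Y τ₀)ᴴ * Z τ₀ - (Z τ₀)ᴴ * Y τ₀) * (Y τ)⁻¹ := by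
  -- `C` is Hermitian
  have hC : Cᴴ = C := by
    ext i j
    rw [Matrix.conjTranspose_apply]
    have h1 : C j i = C i j := by
      conv_rhs => rw [← hCsymm, Matrix.transpose_apply]
    rw [h1]
    exact Complex.conj_eq_iff_im.mpr (hCre i j)
  -- `D τ` is Hermitian on `J`
  have hD : ∀ τ ∈ J, (D τ)ᴴ = D τ := by
    intro τ hτ
    ext i j
    rw [Matrix.conjTranspose_apply]
    have h1 : D τ j i = D τ i j := by
      conv_rhs => rw [← hDsymm τ hτ, Matrix.transpose_apply]
    rw [h1]
    exact Complex.conj_eq_iff_im.mpr (hDre τ hτ i j)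
  -- the Wronskian
  set W : ℝ → Matrix (Fin n) (Fin n) ℂ := fun τ => (Y τ)ᴴ * Z τ - (Z τ)ᴴ * Y τ with hWdef
  have hW : ∀ τ ∈ J, HasDerivWithinAt W 0 J τ := by
    intro τ hτ
    have h1 := hasDerivWithinAt_matrix_mul (hasDerivWithinAt_conjTranspose (hY τ hτ)) (hZ τ hτ)
    have h2 := hasDerivWithinAt_matrix_mul (hasDerivWithinAt_conjTranspose (hZ τ hτ)) (hY τ hτ)
    have h3 := h1.sub h2
    convert (by exact h3 : HasDerivWithinAt W _ J τ) using 1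
    simp only [Matrix.conjTranspose_mul, Matrix.conjTranspose_neg, hC, hD τ hτ]
    simp only [Matrix.neg_mul, Matrix.mul_neg, mul_assoc]
    abel
  have hconv : Convex ℝ J := convex_iff_ordConnected.mpr hJ
  have hWconst : ∀ τ ∈ J, W τ = W τ₀ := by
    intro τ hτ
    have hb : ∀ x ∈ J, ‖(fun _ : ℝ => (0 : Matrix (Fin n) (Fin n) ℂ)) x‖ ≤ 0 := by simp
    have := hconv.norm_image_sub_le_of_norm_hasDerivWithin_le
      (f := W) (f' := fun _ => 0) hW hb hτ₀ hτ
    rw [zero_mul] at this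
    have h0 : W τ - W τ₀ = 0 := norm_le_zero_iff.mp this
    exact sub_eq_zero.mp h0
  intro τ hτ
  have key : (Y τ)ᴴ * Z τ - (Z τ)ᴴ * Y τ = (Y τ₀)ᴴ * Z τ₀ - (Z τ₀)ᴴ * Y τ₀ := hWconst τ hτ
  have hdet : IsUnit (Y τ).det := (Matrix.isUnit_iff_isUnit_det _).mp (hYinv τ hτ)
  have hdetH : IsUnit ((Y τ)ᴴ).det := by
    rw [Matrix.det_conjTranspose]; exact hdet.star
  rw [← key, Matrix.conjTranspose_mul, Matrix.conjTranspose_nonsing_inv]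
  rw [Matrix.mul_sub, Matrix.sub_mul]
  rw [← Matrix.mul_assoc, ← Matrix.mul_assoc, Matrix.nonsing_inv_mul _ hdetH, Matrix.one_mul,
    Matrix.mul_assoc ((Y τ)ᴴ)⁻¹ ((Z τ)ᴴ) (Y τ), Matrix.mul_assoc,
    Matrix.mul_assoc, Matrix.mul_nonsing_inv _ hdet, Matrix.mul_one]
end
end

section
/- Let n ≥ 1, let J ⊆ ℝ be an interval, let C be an n × n matrix with real entries and Cᵀ = C, and let D : J → M_n(ℂ) take values in matrices with real entries satisfying D(τ)ᵀ = D(τ). Let Y, Z : J → M_n(ℂ) be differentiable with Y'(τ) = C·Z(τ) and Z'(τ) = −D(τ)·Y(τ) on J, suppose Y(τ) is invertible for every τ ∈ J, and suppose H(τ) := Z(τ)Y(τ)⁻¹ satisfies H(τ)ᵀ = H(τ) for all τ ∈ J. Then the function τ ↦ det( Im H(τ) ) · |det Y(τ)|² is constant on J, where Im H(τ) is the real n × n matrix of entrywise imaginary parts of H(τ). -/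
open Matrix

noncomputable section

attribute [local instance] Matrix.normedAddCommGroup Matrix.normedSpace

/-- Entrywise imaginary part of a complex matrix. -/
def imPart {n : ℕ} (A : Matrix (Fin n) (Fin n) ℂ) : Matrix (Fin n) (Fin n) ℝ :=
  Matrix.of fun i j => (A i j).im

private lemma entry_deriv {n : ℕ} {J : Set ℝ} {A : ℝ → Matrix (Fin n) (Fin n) ℂ}
    {A' : Matrix (Fin n) (Fin n) ℂ} {τ : ℝ} (hA : HasDerivWithinAt A A' J τ) (i j : Fin n) :
    HasDerivWithinAt (fun t => A t i j) (A' i j) J τ :=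
  hasDerivWithinAt_pi.1 (hasDerivWithinAt_pi.1 hA i) j

/-- Product rule for `t ↦ (A t)ᴴ * B t`. -/
private lemma hasDerivWithinAt_conjT_mul {n : ℕ} {J : Set ℝ}
    {A B : ℝ → Matrix (Fin n) (Fin n) ℂ} {A' B' : Matrix (Fin n) (Fin n) ℂ} {τ : ℝ}
    (hA : HasDerivWithinAt A A' J τ) (hB : HasDerivWithinAt B B' J τ) :
    HasDerivWithinAt (fun t => (A t)ᴴ * B t) (A'ᴴ * B τ + (A τ)ᴴ * B') J τ := by
  refine hasDerivWithinAt_pi.2 fun i => hasDerivWithinAt_pi.2 fun j => ?_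
  have : ∀ t, ((A t)ᴴ * B t) i j = ∑ k, star (A t k i) * B t k j := by
    intro t; simp [Matrix.mul_apply, Matrix.conjTranspose_apply]
  simp only [this]
  have hgoal : HasDerivWithinAt (fun t => ∑ k, star (A t k i) * B t k j)
      (∑ k, (star (A' k i) * B τ k j + star (A τ k i) * B' k j)) J τ := by
    refine HasDerivWithinAt.fun_sum fun k _ => ?_
    exact ((entry_deriv hA k i).star).mul (entry_deriv hB k j)
  convert hgoal using 1
  · rfl
  simp [Matrix.add_apply, Matrix.mul_apply, Matrix.conjTranspose_apply, Finset.sum_add_distrib]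

/-- Conservation law for the Gaussian-beam Riccati flow: if `Y' = CZ`, `Z' = −DY` with
`C`, `D(τ)` real symmetric, `Y(τ)` invertible and `H = ZY⁻¹` symmetric on the interval `J`,
then `det(Im H(τ))·|det Y(τ)|²` is constant on `J`. -/
theorem det_imH_absdetY_sq_constant
    {n : ℕ} (hn : 1 ≤ n) (J : Set ℝ) (hJ : J.OrdConnected)
    (C : Matrix (Fin n) (Fin n) ℂ)
    (hCre : ∀ i j, (C i j).im = 0) (hCsymm : Cᵀ = C)
    (D : ℝ → Matrix (Fin n) (Fin n) ℂ)
    (hDre : ∀ τ ∈ J, ∀ i j, (D τ i j).im = 0)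
    (hDsymm : ∀ τ ∈ J, (D τ)ᵀ = D τ)
    (Y Z : ℝ → Matrix (Fin n) (Fin n) ℂ)
    (hY : ∀ τ ∈ J, HasDerivWithinAt Y (C * Z τ) J τ)
    (hZ : ∀ τ ∈ J, HasDerivWithinAt Z (-(D τ * Y τ)) J τ)
    (hYinv : ∀ τ ∈ J, IsUnit (Y τ))
    (hHsymm : ∀ τ ∈ J, (Z τ * (Y τ)⁻¹)ᵀ = Z τ * (Y τ)⁻¹) :
    ∀ τ ∈ J, ∀ σ ∈ J,
      (imPart (Z τ * (Y τ)⁻¹)).det * (‖(Y τ).det‖) ^ 2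
        = (imPart (Z σ * (Y σ)⁻¹)).det * (‖(Y σ).det‖) ^ 2 := by
  -- real-entried matrices are conj-invariant
  have hCH : Cᴴ = C := by
    ext i j
    have hsym : C j i = C i j := congrFun (congrFun hCsymm i) j
    rw [Matrix.conjTranspose_apply, hsym, Complex.star_def]
    exact Complex.conj_eq_iff_im.2 (hCre i j)
  have hDH : ∀ τ ∈ J, (D τ)ᴴ = D τ := by
    intro τ hτ
    ext i j
    have hsym : D τ j i = D τ i j := congrFun (congrFun (hDsymm τ hτ) i) j
    rw [Matrix.conjTranspose_apply, hsym, Complex.star_def]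
    exact Complex.conj_eq_iff_im.2 (hDre τ hτ i j)
  -- the conserved matrix
  set W : ℝ → Matrix (Fin n) (Fin n) ℂ := fun t => (Y t)ᴴ * Z t - (Z t)ᴴ * Y t with hW
  have hWderiv : ∀ τ ∈ J, HasDerivWithinAt W 0 J τ := by
    intro τ hτ
    have h1 := hasDerivWithinAt_conjT_mul (hY τ hτ) (hZ τ hτ)
    have h2 := hasDerivWithinAt_conjT_mul (hZ τ hτ) (hY τ hτ)
    have h := h1.sub h2
    convert h using 1
    iterate 4 (· rfl)
    have e1 : (C * Z τ)ᴴ = (Z τ)ᴴ * C := by rw [Matrix.conjTranspose_mul, hCH]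
    have e2 : (-(D τ * Y τ))ᴴ = -((Y τ)ᴴ * D τ) := by
      rw [Matrix.conjTranspose_neg, Matrix.conjTranspose_mul, hDH τ hτ]
    rw [e1, e2]
    -- normalize
    noncomm_ring
  -- W is constant on J
  have hWconst : ∀ τ ∈ J, ∀ σ ∈ J, W τ = W σ := by
    intro τ hτ σ hσ
    have h0 : (ContinuousLinearMap.toSpanSingleton ℝ
        (0 : Matrix (Fin n) (Fin n) ℂ)) = 0 := by ext x; simp
    have := hJ.convex.norm_image_sub_le_of_norm_hasFDerivWithin_le
      (f' := fun _ => (0 : ℝ →L[ℝ] Matrix (Fin n) (Fin n) ℂ))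
      (C := 0)
      (fun x hx => h0 ▸ (hWderiv x hx).hasFDerivWithinAt)
      (fun x _ => le_of_eq norm_zero) hσ hτ
    have : ‖W τ - W σ‖ ≤ 0 := by simpa using this
    have := le_antisymm this (norm_nonneg _)
    rwa [norm_eq_zero, sub_eq_zero] at this
  -- identify det W with the conserved quantity
  have key : ∀ τ ∈ J, (W τ).det
      = (2 * Complex.I) ^ n *
        (((imPart (Z τ * (Y τ)⁻¹)).det * (‖(Y τ).det‖) ^ 2 : ℝ) : ℂ) := by
    intro τ hτ
    have hdet : IsUnit (Y τ).det := (Matrix.isUnit_iff_isUnit_det _).1 (hYinv τ hτ)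
    set H := Z τ * (Y τ)⁻¹ with hH
    have hZY : H * Y τ = Z τ := Matrix.nonsing_inv_mul_cancel_right _ _ hdet
    have e1 : (Y τ)ᴴ * Z τ = (Y τ)ᴴ * H * Y τ := by rw [Matrix.mul_assoc, hZY]
    have e2 : (Z τ)ᴴ * Y τ = (Y τ)ᴴ * H.map (starRingEnd ℂ) * Y τ := by
      have : (Z τ)ᴴ = (Y τ)ᴴ * Hᴴ := by rw [← hZY, Matrix.conjTranspose_mul]
      rw [this]
      congr 1
      congr 1
      rw [Matrix.conjTranspose, hHsymm τ hτ]
      rfl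
    have eW : W τ = (Y τ)ᴴ * ((2 * Complex.I) • (imPart H).map (Complex.ofRealHom : ℝ →+* ℂ)) * Y τ := by
      have hsub : H - H.map (starRingEnd ℂ)
          = (2 * Complex.I) • (imPart H).map (Complex.ofRealHom : ℝ →+* ℂ) := by
        ext i j
        simp only [Matrix.sub_apply, Matrix.map_apply, Matrix.smul_apply, imPart,
          Matrix.of_apply, smul_eq_mul]
        rw [Complex.sub_conj]
        simp [Complex.ofRealHom_eq_coe]

        ring
      rw [hW]
      simp only [e1, e2, ← hsub, Matrix.mul_sub, Matrix.sub_mul]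
    rw [eW]
    rw [Matrix.det_mul, Matrix.det_mul, Matrix.det_smul, Matrix.det_conjTranspose]
    rw [show (imPart H).map ⇑(Complex.ofRealHom : ℝ →+* ℂ)
        = (Complex.ofRealHom : ℝ →+* ℂ).mapMatrix (imPart H) from rfl,
      ← RingHom.map_det, Fintype.card_fin]
    have habs : star (Y τ).det * (Y τ).det = ((‖(Y τ).det‖ ^ 2 : ℝ) : ℂ) := by
      rw [Complex.star_def, mul_comm, Complex.mul_conj, Complex.sq_norm]
    rw [Complex.ofReal_mul, ← habs]
    simp only [Complex.ofRealHom_eq_coe]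
    ring
  intro τ hτ σ hσ
  have h2In : (2 * Complex.I) ^ n ≠ 0 := by
    apply pow_ne_zero
    simp [Complex.I_ne_zero]
  have := hWconst τ hτ σ hσ
  have hdet : (W τ).det = (W σ).det := by rw [this]
  rw [key τ hτ, key σ hσ] at hdet
  have := mul_left_cancel₀ h2In hdet
  exact_mod_cast this
end
end

section
/- Let n ≥ 1, let J ⊆ ℝ be an interval containing τ₀, let C be an n × n matrix with real entries and Cᵀ = C, and let D : J → M_n(ℂ) take values in matrices with real entries satisfying D(τ)ᵀ = D(τ). Let Y, Z : J → M_n(ℂ) be differentiable with Y'(τ) = C·Z(τ) and Z'(τ) = −D(τ)·Y(τ) on J, suppose Y(τ) is invertible for every τ ∈ J, and suppose H(τ) := Z(τ)Y(τ)⁻¹ satisfies H(τ)ᵀ = H(τ) for all τ ∈ J. If the real symmetric matrix Im H(τ₀) is positive definite, then Im H(τ) is positive definite for every τ ∈ J. -/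
open Matrix

noncomputable section

attribute [local instance] Matrix.normedAddCommGroup Matrix.normedSpace

namespace GaussBeamAux

variable {n : ℕ}

abbrev Mat (n : ℕ) := Matrix (Fin n) (Fin n) ℂ

/-- Star (conjugate transpose) as a continuous ℝ-linear map on matrices. -/
def starCLM (n : ℕ) : Mat n →L[ℝ] Mat n :=
  LinearMap.toContinuousLinearMap
    { toFun := fun A => star A
      map_add' := fun A B => star_add A B
      map_smul' := fun r A => by
        ext i j
        simp [Matrix.conjTranspose_apply, Complex.ext_iff] }

@[simp] lemma starCLM_apply (A : Mat n) : starCLM n A = star A := rfl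

/-- Left multiplication as a continuous bilinear map on matrices (over ℝ). -/
def mulCLM (n : ℕ) : Mat n →L[ℝ] Mat n →L[ℝ] Mat n :=
  LinearMap.toContinuousLinearMap
    { toFun := fun A => LinearMap.toContinuousLinearMap (LinearMap.mulLeft ℝ A)
      map_add' := fun A B => by
        apply ContinuousLinearMap.ext; intro X
        simp [add_mul]
      map_smul' := fun r A => by
        apply ContinuousLinearMap.ext; intro X
        simp [smul_mul_assoc] }

@[simp] lemma mulCLM_apply (A B : Mat n) : mulCLM n A B = A * B := rfl

lemma hasDerivWithinAt_mul {f g : ℝ → Mat n} {f' g' : Mat n} {s : Set ℝ} {x : ℝ}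
    (hf : HasDerivWithinAt f f' s x) (hg : HasDerivWithinAt g g' s x) :
    HasDerivWithinAt (fun t => f t * g t) (f' * g x + f x * g') s x := by
  letI := (Matrix.linftyOpNormedRing : NormedRing (Mat n))
  letI := (Matrix.linftyOpNormedAlgebra : NormedAlgebra ℝ (Mat n))
  exact hf.mul hg

lemma hasDerivWithinAt_star {f : ℝ → Mat n} {f' : Mat n} {s : Set ℝ} {x : ℝ}
    (hf : HasDerivWithinAt f f' s x) :
    HasDerivWithinAt (fun t => star (f t)) (star f') s x := by
  have := ((starCLM n).hasFDerivAt (x := f x)).comp_hasDerivWithinAt x hf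
  exact this

lemma dot_star_mulVec (P : Mat n) (v c : Fin n → ℂ) :
    star v ⬝ᵥ ((star P) *ᵥ c) = star (P *ᵥ v) ⬝ᵥ c := by
  rw [Matrix.dotProduct_mulVec, Matrix.star_mulVec, Matrix.star_eq_conjTranspose]

/-- real part of a complexified real quadratic form. -/
lemma re_quad (A : Matrix (Fin n) (Fin n) ℝ) (v : Fin n → ℂ) :
    (star v ⬝ᵥ ((A.map (fun r : ℝ => (r : ℂ))) *ᵥ v)).re =
      (fun i => (v i).re) ⬝ᵥ (A *ᵥ fun i => (v i).re) +
      (fun i => (v i).im) ⬝ᵥ (A *ᵥ fun i => (v i).im) := by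
  simp only [dotProduct, Matrix.mulVec, Matrix.map_apply, Pi.star_apply,
    Finset.mul_sum, Complex.re_sum, Finset.sum_mul]
  rw [← Finset.sum_add_distrib]
  refine Finset.sum_congr rfl fun i _ => ?_
  rw [← Finset.sum_add_distrib]
  refine Finset.sum_congr rfl fun j _ => ?_
  simp [Complex.mul_re, Complex.mul_im]

/-- a symmetric matrix minus its conjugate transpose is `2i` times its imaginary part. -/
lemma sub_star_of_symm {H : Mat n} (hs : Hᵀ = H) :
    H - star H = ((2 : ℂ) * Complex.I) • ((imPart H).map (fun r : ℝ => (r : ℂ))) := by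
  ext i j
  have hsym : H j i = H i j := by have h := congrFun (congrFun hs i) j; simpa using h
  simp only [Matrix.sub_apply, Matrix.star_eq_conjTranspose, Matrix.conjTranspose_apply,
    Matrix.smul_apply, Matrix.map_apply, imPart, Matrix.of_apply, hsym, smul_eq_mul]
  rw [Complex.star_def, Complex.sub_conj]
  push_cast
  ring

end GaussBeamAux

open GaussBeamAux

/-- Positivity is preserved along the Gaussian-beam Riccati flow: if `Y' = CZ`, `Z' = −DY`
with `C`, `D(τ)` real symmetric, `Y(τ)` invertible and `H = ZY⁻¹` symmetric on the interval
`J ∋ τ₀`, and `Im H(τ₀)` is positive definite, then `Im H(τ)` is positive definite on `J`. -/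
theorem imH_posdef_preserved
    {n : ℕ} (hn : 1 ≤ n) (J : Set ℝ) (hJ : J.OrdConnected)
    (τ₀ : ℝ) (hτ₀ : τ₀ ∈ J)
    (C : Matrix (Fin n) (Fin n) ℂ)
    (hCre : ∀ i j, (C i j).im = 0) (hCsymm : Cᵀ = C)
    (D : ℝ → Matrix (Fin n) (Fin n) ℂ)
    (hDre : ∀ τ ∈ J, ∀ i j, (D τ i j).im = 0)
    (hDsymm : ∀ τ ∈ J, (D τ)ᵀ = D τ)
    (Y Z : ℝ → Matrix (Fin n) (Fin n) ℂ)
    (hY : ∀ τ ∈ J, HasDerivWithinAt Y (C * Z τ) J τ)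
    (hZ : ∀ τ ∈ J, HasDerivWithinAt Z (-(D τ * Y τ)) J τ)
    (hYinv : ∀ τ ∈ J, IsUnit (Y τ))
    (hHsymm : ∀ τ ∈ J, (Z τ * (Y τ)⁻¹)ᵀ = Z τ * (Y τ)⁻¹)
    (hpos : (imPart (Z τ₀ * (Y τ₀)⁻¹)).PosDef) :
    ∀ τ ∈ J, (imPart (Z τ * (Y τ)⁻¹)).PosDef := by
  classical
  -- reality facts
  have hCstar : star C = C := by
    ext i j
    have hsym : C j i = C i j := by have h := congrFun (congrFun hCsymm i) j; simpa using h
    simp only [Matrix.star_eq_conjTranspose, Matrix.conjTranspose_apply, hsym]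
    exact Complex.conj_eq_iff_im.2 (hCre i j)
  have hDstar : ∀ τ ∈ J, star (D τ) = D τ := by
    intro τ hτ
    ext i j
    have hsym : D τ j i = D τ i j := by
      have h := congrFun (congrFun (hDsymm τ hτ) i) j; simpa using h
    simp only [Matrix.star_eq_conjTranspose, Matrix.conjTranspose_apply, hsym]
    exact Complex.conj_eq_iff_im.2 (hDre τ hτ i j)
  -- determinant units
  have hdet : ∀ τ ∈ J, IsUnit (Y τ).det := fun τ hτ =>
    (Matrix.isUnit_iff_isUnit_det _).1 (hYinv τ hτ)
  have hdetS : ∀ τ ∈ J, IsUnit (star (Y τ)).det := fun τ hτ =>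
    (Matrix.isUnit_iff_isUnit_det _).1 ((hYinv τ hτ).star)
  -- the invariant W
  set W : ℝ → Mat n := fun t => star (Y t) * Z t - star (Z t) * Y t with hWdef
  have hWderiv : ∀ τ ∈ J, HasDerivWithinAt W 0 J τ := by
    intro τ hτ
    have h1 := hasDerivWithinAt_mul (hasDerivWithinAt_star (hY τ hτ)) (hZ τ hτ)
    have h2 := hasDerivWithinAt_mul (hasDerivWithinAt_star (hZ τ hτ)) (hY τ hτ)
    have h3 := h1.sub h2
    refine h3.congr_deriv ?_
    rw [star_neg, StarMul.star_mul, StarMul.star_mul, hCstar, hDstar τ hτ]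
    noncomm_ring
  have hWconst : ∀ τ ∈ J, W τ = W τ₀ := by
    intro τ hτ
    have hconv : Convex ℝ J := hJ.convex
    have hzero : (ContinuousLinearMap.smulRight (1 : ℝ →L[ℝ] ℝ) (0 : Mat n)) = 0 := by
      ext t; simp
    have hb := hconv.norm_image_sub_le_of_norm_hasFDerivWithin_le
      (f' := fun _ => ContinuousLinearMap.smulRight (1 : ℝ →L[ℝ] ℝ) (0 : Mat n))
      (fun t ht => (hWderiv t ht).hasFDerivWithinAt)
      (fun t ht => le_of_eq (by simp; rfl)) hτ₀ hτ
    rw [zero_mul] at hb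
    exact sub_eq_zero.1 (norm_le_zero_iff.1 hb)
  -- sandwich identity
  have hsand : ∀ τ ∈ J, ∀ w : Fin n → ℂ,
      star (Y τ *ᵥ w) ⬝ᵥ
        ((Z τ * (Y τ)⁻¹ - star (Z τ * (Y τ)⁻¹)) *ᵥ (Y τ *ᵥ w)) =
      star w ⬝ᵥ (W τ *ᵥ w) := by
    intro τ hτ w
    have key : star (Y τ) * ((Z τ * (Y τ)⁻¹ - star (Z τ * (Y τ)⁻¹)) * Y τ) = W τ := by
      have h1 : star ((Y τ)⁻¹) = (star (Y τ))⁻¹ := by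
        rw [Matrix.star_eq_conjTranspose, Matrix.star_eq_conjTranspose,
          Matrix.conjTranspose_nonsing_inv]
      rw [sub_mul, StarMul.star_mul, h1, mul_sub, hWdef]
      congr 1
      · rw [mul_assoc (Z τ), Matrix.nonsing_inv_mul _ (hdet τ hτ), mul_one]
      · rw [← mul_assoc, ← mul_assoc, Matrix.mul_nonsing_inv _ (hdetS τ hτ), one_mul]
    calc star (Y τ *ᵥ w) ⬝ᵥ ((Z τ * (Y τ)⁻¹ - star (Z τ * (Y τ)⁻¹)) *ᵥ (Y τ *ᵥ w))
        = star w ⬝ᵥ (star (Y τ) *ᵥ ((Z τ * (Y τ)⁻¹ - star (Z τ * (Y τ)⁻¹)) *ᵥ (Y τ *ᵥ w))) := by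
          rw [dot_star_mulVec]
      _ = star w ⬝ᵥ (W τ *ᵥ w) := by
          rw [Matrix.mulVec_mulVec, Matrix.mulVec_mulVec, ← key, mul_assoc]
  intro τ hτ
  set M₀ : Mat n := Z τ₀ * (Y τ₀)⁻¹ with hM₀
  set Mτ : Mat n := Z τ * (Y τ)⁻¹ with hMτ
  have hherm : (imPart Mτ).IsHermitian := by
    ext i j
    have hsym : Mτ j i = Mτ i j := by
      have h := congrFun (congrFun (hHsymm τ hτ) i) j; simpa [hMτ] using h
    simp [Matrix.IsHermitian, Matrix.conjTranspose_apply, imPart, hsym]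
  refine Matrix.PosDef.of_dotProduct_mulVec_pos hherm ?_
  intro x hx
  -- complexify
  set v : Fin n → ℂ := fun i => ((x i : ℝ) : ℂ) with hv
  have hvne : v ≠ 0 := by
    intro h
    apply hx
    funext i
    have h2 : ((x i : ℝ) : ℂ) = 0 := congrFun h i
    simpa using h2
  set w : Fin n → ℂ := (Y τ)⁻¹ *ᵥ v with hw
  have hvYw : Y τ *ᵥ w = v := by
    rw [hw, Matrix.mulVec_mulVec, Matrix.mul_nonsing_inv _ (hdet τ hτ), Matrix.one_mulVec]
  set u : Fin n → ℂ := Y τ₀ *ᵥ w with hu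
  have hune : u ≠ 0 := by
    intro h
    apply hvne
    have : (Y τ₀)⁻¹ *ᵥ u = w := by
      rw [hu, Matrix.mulVec_mulVec, Matrix.nonsing_inv_mul _ (hdet τ₀ hτ₀), Matrix.one_mulVec]
    rw [← hvYw, ← this, h]
    simp
  -- the chain of equalities
  have hchain : star v ⬝ᵥ ((Mτ - star Mτ) *ᵥ v) = star u ⬝ᵥ ((M₀ - star M₀) *ᵥ u) := by
    calc star v ⬝ᵥ ((Mτ - star Mτ) *ᵥ v)
        = star (Y τ *ᵥ w) ⬝ᵥ ((Mτ - star Mτ) *ᵥ (Y τ *ᵥ w)) := by rw [hvYw]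
      _ = star w ⬝ᵥ (W τ *ᵥ w) := hsand τ hτ w
      _ = star w ⬝ᵥ (W τ₀ *ᵥ w) := by rw [hWconst τ hτ]
      _ = star u ⬝ᵥ ((M₀ - star M₀) *ᵥ u) := (hsand τ₀ hτ₀ w).symm
  -- translate to imaginary parts
  have hsubτ := sub_star_of_symm (H := Mτ) (hHsymm τ hτ)
  have hsub₀ := sub_star_of_symm (H := M₀) (hHsymm τ₀ hτ₀)
  rw [hsubτ, hsub₀] at hchain
  have hI : ((2 : ℂ) * Complex.I) ≠ 0 := by
    simp [Complex.I_ne_zero]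
  have hchain2 :
      star v ⬝ᵥ (((imPart Mτ).map (fun r : ℝ => (r : ℂ))) *ᵥ v) =
      star u ⬝ᵥ (((imPart M₀).map (fun r : ℝ => (r : ℂ))) *ᵥ u) := by
    apply mul_left_cancel₀ hI
    simpa [Matrix.smul_mulVec, dotProduct_smul, smul_eq_mul] using hchain
  -- take real parts
  have hre := congrArg Complex.re hchain2
  rw [re_quad, re_quad] at hre
  have hvre : (fun i => (v i).re) = x := by funext i; simp [hv]
  have hvim : (fun i => (v i).im) = (0 : Fin n → ℝ) := by funext i; simp [hv]
  rw [hvre, hvim] at hre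
  simp only [Matrix.mulVec_zero, dotProduct_zero, add_zero] at hre
  -- positivity of the right side
  set a : Fin n → ℝ := fun i => (u i).re with ha
  set b : Fin n → ℝ := fun i => (u i).im with hb
  have hab : a ≠ 0 ∨ b ≠ 0 := by
    by_contra h
    push_neg at h
    apply hune
    funext i
    have h1 := congrFun h.1 i
    have h2 := congrFun h.2 i
    exact Complex.ext h1 h2
  have hposa : ∀ c : Fin n → ℝ, 0 ≤ c ⬝ᵥ (imPart M₀ *ᵥ c) := by
    intro c
    simpa using hpos.posSemidef.dotProduct_mulVec_nonneg c
  have hrhs : 0 < a ⬝ᵥ (imPart M₀ *ᵥ a) + b ⬝ᵥ (imPart M₀ *ᵥ b) := by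
    rcases hab with h | h
    · have := hpos.dotProduct_mulVec_pos h
      simp only [star_trivial] at this
      exact add_pos_of_pos_of_nonneg this (hposa b)
    · have := hpos.dotProduct_mulVec_pos h
      simp only [star_trivial] at this
      exact add_pos_of_nonneg_of_pos (hposa a) this
  have : 0 < x ⬝ᵥ (imPart Mτ *ᵥ x) := by rw [hre]; exact hrhs
  simpa using this
end
end
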